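/- The map ε_T : Ш_N(A) → k defined on pure tensors by ε_T(a₁⊗⋯⊗aₙ) = ε_A(a₁)⋯ε_A(aₙ) is an algebra homomorphism: ε_T(𝔞 ⋄ 𝔟) = ε_T(𝔞)ε_T(𝔟). -/

import Mathlib

open TensorProduct

variable (k A : Type*) [CommRing k] [CommRing A] [Algebra k A]

/-- The pure tensor `a₁ ⊗ ⋯ ⊗ aₘ`, realized inside the tensor algebra
`T(A) = ⊕_{n≥0} A^{⊗n}` as the product `ι a₁ * ⋯ * ι aₘ`. -/
noncomputable def pureTensor (l : List A) : TensorAlgebra k A :=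
  (l.map (TensorAlgebra.ι k)).prod

/-- The underlying module `Ш_N(A) = ⊕_{n≥1} A^{⊗n}` of the free commutative Nijenhuis
algebra on `A`: the span of the nonempty pure tensors inside the tensor algebra. -/
noncomputable def ShN : Submodule k (TensorAlgebra k A) :=
  Submodule.span k {x | ∃ l : List A, l ≠ [] ∧ x = pureTensor k A l}

/-- The right-shift operator `P_r(𝔞) = 1_A ⊗ 𝔞`. -/
noncomputable def Pr : TensorAlgebra k A →ₗ[k] TensorAlgebra k A :=
  LinearMap.mulLeft k (TensorAlgebra.ι k (1 : A))

/-- The defining recursion of the product `⋄` of the free commutative Nijenhuis algebra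
`Ш_N(A)`: for pure tensors `𝔞 = a₁ ⊗ 𝔞′ ∈ A^{⊗m}` and `𝔟 = b₁ ⊗ 𝔟′ ∈ A^{⊗n}`,
`𝔞 ⋄ 𝔟 = a₁b₁` if `m = n = 1`, `𝔞 ⋄ 𝔟 = a₁b₁ ⊗ 𝔟′` if `m = 1, n ≥ 2`,
`𝔞 ⋄ 𝔟 = a₁b₁ ⊗ 𝔞′` if `m ≥ 2, n = 1`, and
`𝔞 ⋄ 𝔟 = a₁b₁ ⊗ (𝔞′ ⋄ (1⊗𝔟′) + (1⊗𝔞′) ⋄ 𝔟′ - 1 ⊗ (𝔞′ ⋄ 𝔟′))` if `m, n ≥ 2`. -/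
def NijRec (d : TensorAlgebra k A →ₗ[k] TensorAlgebra k A →ₗ[k] TensorAlgebra k A) : Prop :=
  (∀ a b : A, d (TensorAlgebra.ι k a) (TensorAlgebra.ι k b) = TensorAlgebra.ι k (a * b)) ∧
  (∀ (a b : A) (m : List A), m ≠ [] →
    d (TensorAlgebra.ι k a) (TensorAlgebra.ι k b * pureTensor k A m) =
      TensorAlgebra.ι k (a * b) * pureTensor k A m) ∧
  (∀ (a b : A) (l : List A), l ≠ [] →
    d (TensorAlgebra.ι k a * pureTensor k A l) (TensorAlgebra.ι k b) =
      TensorAlgebra.ι k (a * b) * pureTensor k A l) ∧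
  (∀ (a b : A) (l m : List A), l ≠ [] → m ≠ [] →
    d (TensorAlgebra.ι k a * pureTensor k A l) (TensorAlgebra.ι k b * pureTensor k A m) =
      TensorAlgebra.ι k (a * b) *
        (d (pureTensor k A l) (Pr k A (pureTensor k A m)) +
         d (Pr k A (pureTensor k A l)) (pureTensor k A m) -
         Pr k A (d (pureTensor k A l) (pureTensor k A m))))

/-! Induction on the total length of two pure tensors. In the recursive case all three terms
have `ε_T` equal to `ε_T(𝔞′) ε_T(𝔟′)`, because prepending `1` does not change `ε_T` (`ε_A(1) = 1`),
so `ε_T(𝔞 ⋄ 𝔟) = ε_A(a₁b₁)(1 + 1 - 1) ε_T(𝔞′) ε_T(𝔟′)`; bilinearity extends this to `Ш_N(A)`. -/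

theorem LinearMap.eq_of_mem_span₂ {R M N P : Type*} [CommSemiring R] [AddCommMonoid M]
    [AddCommMonoid N] [AddCommMonoid P] [Module R M] [Module R N] [Module R P]
    {s : Set M} {t : Set N} {f g : M →ₗ[R] N →ₗ[R] P}
    (h : ∀ x ∈ s, ∀ y ∈ t, f x y = g x y) :
    ∀ x ∈ Submodule.span R s, ∀ y ∈ Submodule.span R t, f x y = g x y := by
  intro x hx y hy
  have hs : ∀ x ∈ s, f x y = g x y := fun x' hx' => LinearMap.eqOn_span (h x' hx') hy
  exact LinearMap.eqOn_span (f := f.flip y) (g := g.flip y) hs hx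

section

variable {k A}

theorem pureTensor_nil : pureTensor k A [] = 1 := by
  simp [pureTensor]

theorem pureTensor_cons (a : A) (l : List A) :
    pureTensor k A (a :: l) = TensorAlgebra.ι k a * pureTensor k A l := by
  simp [pureTensor]

theorem pureTensor_mem_ShN {l : List A} (hl : l ≠ []) : pureTensor k A l ∈ ShN k A :=
  Submodule.subset_span ⟨l, hl, rfl⟩

theorem ι_mul_mem_ShN (c : A) {x : TensorAlgebra k A} (hx : x ∈ ShN k A) :
    TensorAlgebra.ι k c * x ∈ ShN k A := by
  have : ShN k A ≤ (ShN k A).comap (LinearMap.mulLeft k (TensorAlgebra.ι k c)) :=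
    Submodule.span_le.2 <| by
      rintro _ ⟨l, -, rfl⟩
      simpa [← pureTensor_cons] using pureTensor_mem_ShN (List.cons_ne_nil c l)
  exact this hx

theorem ι_mem_ShN (c : A) : TensorAlgebra.ι k c ∈ ShN k A := by
  simpa [pureTensor_cons, pureTensor_nil] using pureTensor_mem_ShN (List.cons_ne_nil c [])

theorem Pr_pureTensor (l : List A) : Pr k A (pureTensor k A l) = pureTensor k A (1 :: l) :=
  (pureTensor_cons 1 l).symm

theorem Pr_mem_ShN {x : TensorAlgebra k A} (hx : x ∈ ShN k A) : Pr k A x ∈ ShN k A :=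
  ι_mul_mem_ShN 1 hx

variable {epsA : A →ₐ[k] k} {ET : TensorAlgebra k A →ₗ[k] k}
  (hET : ∀ (a : A) (l : List A),
    ET (TensorAlgebra.ι k a * pureTensor k A l) = epsA a * (l.map epsA).prod)
include hET

theorem ET_pureTensor {l : List A} (hl : l ≠ []) :
    ET (pureTensor k A l) = (l.map epsA).prod := by
  obtain ⟨a, l, rfl⟩ := List.exists_cons_of_ne_nil hl
  rw [pureTensor_cons, hET, List.map_cons, List.prod_cons]

theorem ET_pureTensor_one_cons {l : List A} (hl : l ≠ []) :
    ET (pureTensor k A (1 :: l)) = ET (pureTensor k A l) := by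
  rw [pureTensor_cons, hET, ET_pureTensor hET hl, map_one, one_mul]

theorem ET_ι (c : A) : ET (TensorAlgebra.ι k c) = epsA c := by
  simpa [pureTensor_nil] using hET c []

-- `ET` is only prescribed on `Ш_N(A)`, not on the scalars `A^{⊗0}`: hence the hypothesis
-- `x ∈ ShN k A` here, and the closure statement carried along in the induction below.
theorem ET_ι_mul (c : A) {x : TensorAlgebra k A} (hx : x ∈ ShN k A) :
    ET (TensorAlgebra.ι k c * x) = epsA c * ET x := by
  refine LinearMap.eqOn_span (f := ET ∘ₗ LinearMap.mulLeft k (TensorAlgebra.ι k c))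
    (g := epsA c • ET) ?_ hx
  rintro _ ⟨l, hl, rfl⟩
  simp [hET, ET_pureTensor hET hl]

theorem ET_Pr {x : TensorAlgebra k A} (hx : x ∈ ShN k A) : ET (Pr k A x) = ET x := by
  simpa [Pr] using ET_ι_mul hET 1 hx

theorem NijRec.mem_ShN_and_ET_pureTensor
    {d : TensorAlgebra k A →ₗ[k] TensorAlgebra k A →ₗ[k] TensorAlgebra k A}
    (hd : NijRec k A d) {l m : List A} (hl : l ≠ []) (hm : m ≠ []) :
    d (pureTensor k A l) (pureTensor k A m) ∈ ShN k A ∧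
      ET (d (pureTensor k A l) (pureTensor k A m)) =
        ET (pureTensor k A l) * ET (pureTensor k A m) := by
  obtain ⟨hd₁, hd₂, hd₃, hd₄⟩ := hd
  induction hn : l.length + m.length using Nat.strong_induction_on generalizing l m with
  | _ n ih =>
  obtain ⟨a, l, rfl⟩ := List.exists_cons_of_ne_nil hl
  obtain ⟨b, m, rfl⟩ := List.exists_cons_of_ne_nil hm
  simp only [pureTensor_cons]
  rcases eq_or_ne l [] with rfl | hl <;> rcases eq_or_ne m [] with rfl | hm
  · simp only [pureTensor_nil, mul_one, hd₁]
    exact ⟨ι_mem_ShN _, by simp only [ET_ι hET, map_mul]⟩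
  · simp only [pureTensor_nil, mul_one, hd₂ a b m hm]
    refine ⟨ι_mul_mem_ShN _ (pureTensor_mem_ShN hm), ?_⟩
    rw [hET, ET_ι hET, hET, map_mul, mul_assoc]
  · simp only [pureTensor_nil, mul_one, hd₃ a b l hl]
    refine ⟨ι_mul_mem_ShN _ (pureTensor_mem_ShN hl), ?_⟩
    rw [hET, ET_ι hET, hET, map_mul, mul_right_comm]
  · simp only [List.length_cons] at hn
    obtain ⟨hmem₁, hET₁⟩ := ih _ (by simp only [List.length_cons]; omega) hl
      (List.cons_ne_nil 1 m) rfl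
    obtain ⟨hmem₂, hET₂⟩ := ih _ (by simp only [List.length_cons]; omega)
      (List.cons_ne_nil 1 l) hm rfl
    obtain ⟨hmem₃, hET₃⟩ := ih _ (by omega) hl hm rfl
    have hmem := sub_mem (add_mem hmem₁ hmem₂) (Pr_mem_ShN hmem₃)
    rw [hd₄ a b l m hl hm, Pr_pureTensor, Pr_pureTensor]
    refine ⟨ι_mul_mem_ShN _ hmem, ?_⟩
    rw [ET_ι_mul hET _ hmem, map_sub, map_add, hET₁, hET₂, ET_Pr hET hmem₃, hET₃,
      ET_pureTensor_one_cons hET hl, ET_pureTensor_one_cons hET hm, hET, hET,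
      ET_pureTensor hET hl, ET_pureTensor hET hm, map_mul]
    ring

end

/-- With `A` a commutative left counital bialgebra with counit `ε_A`, the map
`ε_T : Ш_N(A) → k` defined on pure tensors by `ε_T(a₁⊗⋯⊗aₙ) = ε_A(a₁)⋯ε_A(aₙ)` is an
algebra homomorphism: `ε_T(𝔞 ⋄ 𝔟) = ε_T(𝔞) ε_T(𝔟)`. -/
theorem epsT_mul
    (d : TensorAlgebra k A →ₗ[k] TensorAlgebra k A →ₗ[k] TensorAlgebra k A)
    (hd : NijRec k A d)
    (epsA : A →ₐ[k] k)
    (ET : TensorAlgebra k A →ₗ[k] k)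
    (hET : ∀ (a : A) (l : List A),
        ET (TensorAlgebra.ι k a * pureTensor k A l) = epsA a * (l.map epsA).prod) :
    ∀ x ∈ ShN k A, ∀ y ∈ ShN k A, ET (d x y) = ET x * ET y := by
  refine LinearMap.eq_of_mem_span₂ (f := d.compr₂ ET) (g := (LinearMap.mul k k).compl₁₂ ET ET) ?_
  rintro _ ⟨l, hl, rfl⟩ _ ⟨m, hm, rfl⟩
  exact (hd.mem_ShN_and_ET_pureTensor hET hl hm).2
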